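/- There exist a universal constant C₁ > 1 and a constant ε̄ ∈ (0,1) such that the following holds for any 0 < ε ≤ ε̄. Suppose the quadruple F = (U,V,W,S) is ε-close to F⋆ in the aligned sense and satisfies the alignment equations. Then ⟨Δ_S, ((UᵀU)⁻¹Uᵀ, (VᵀV)⁻¹Vᵀ, (WᵀW)⁻¹Wᵀ)·((U,V,W)·S⋆ − X⋆)⟩ ≥ ‖D_U‖_F² + ‖D_V‖_F² + ‖D_W‖_F² − C₁·ε·D², where D² = ‖Δ_U·Σ⋆,1‖_F² + ‖Δ_V·Σ⋆,2‖_F² + ‖Δ_W·Σ⋆,3‖_F² + ‖Δ_S‖_F². -/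

import Mathlib

open Matrix MeasureTheory
open scoped Kronecker Classical BigOperators

namespace ScaledGD

noncomputable section

abbrev Tensor (n1 n2 n3 : ℕ) := Fin n1 → Fin n2 → Fin n3 → ℝ

/-- mode-1 matricization, columns indexed by (i3, i2) to match the Kronecker convention -/
def M1 {n1 n2 n3 : ℕ} (X : Tensor n1 n2 n3) : Matrix (Fin n1) (Fin n3 × Fin n2) ℝ :=
  Matrix.of fun i p => X i p.2 p.1

def M2 {n1 n2 n3 : ℕ} (X : Tensor n1 n2 n3) : Matrix (Fin n2) (Fin n3 × Fin n1) ℝ :=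
  Matrix.of fun i p => X p.2 i p.1

def M3 {n1 n2 n3 : ℕ} (X : Tensor n1 n2 n3) : Matrix (Fin n3) (Fin n2 × Fin n1) ℝ :=
  Matrix.of fun i p => X p.2 p.1 i

/-- Tucker product (A,B,C)·S -/
def tucker {m1 m2 m3 r1 r2 r3 : ℕ}
    (A : Matrix (Fin m1) (Fin r1) ℝ) (B : Matrix (Fin m2) (Fin r2) ℝ)
    (C : Matrix (Fin m3) (Fin r3) ℝ) (S : Tensor r1 r2 r3) : Tensor m1 m2 m3 :=
  fun i1 i2 i3 => ∑ j1, ∑ j2, ∑ j3, A i1 j1 * B i2 j2 * C i3 j3 * S j1 j2 j3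

/-- Frobenius norm of a matrix -/
def frob {m n : Type*} [Fintype m] [Fintype n] (A : Matrix m n ℝ) : ℝ :=
  Real.sqrt (∑ i, ∑ j, (A i j) ^ 2)

/-- Frobenius norm of a tensor -/
def frobT {n1 n2 n3 : ℕ} (X : Tensor n1 n2 n3) : ℝ :=
  Real.sqrt (∑ i1, ∑ i2, ∑ i3, (X i1 i2 i3) ^ 2)

def innerT {n1 n2 n3 : ℕ} (X Y : Tensor n1 n2 n3) : ℝ :=
  ∑ i1, ∑ i2, ∑ i3, X i1 i2 i3 * Y i1 i2 i3

def innerM {m n : Type*} [Fintype m] [Fintype n] (A B : Matrix m n ℝ) : ℝ :=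
  ∑ i, ∑ j, A i j * B i j

def rowNorm {m n : Type*} [Fintype n] (A : Matrix m n ℝ) (i : m) : ℝ :=
  Real.sqrt (∑ j, (A i j) ^ 2)

/-- ‖·‖_{2,∞}: largest ℓ2 norm of the rows -/
def norm2inf {m n : Type*} [Fintype m] [Fintype n] (A : Matrix m n ℝ) : ℝ :=
  ⨆ i, rowNorm A i

def vecNorm {n : Type*} [Fintype n] (x : n → ℝ) : ℝ :=
  Real.sqrt (∑ i, (x i) ^ 2)

/-- spectral norm -/
def opNorm {m n : Type*} [Fintype m] [Fintype n] (A : Matrix m n ℝ) : ℝ :=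
  sSup { c | ∃ x : n → ℝ, vecNorm x ≤ 1 ∧ c = vecNorm (A.mulVec x) }

/-- a factor quadruple -/
structure Quad (n1 n2 n3 r1 r2 r3 : ℕ) where
  U : Matrix (Fin n1) (Fin r1) ℝ
  V : Matrix (Fin n2) (Fin r2) ℝ
  W : Matrix (Fin n3) (Fin r3) ℝ
  S : Tensor r1 r2 r3

variable {n1 n2 n3 r1 r2 r3 : ℕ}

/-- the tensor (U,V,W)·S represented by a quadruple -/
def Quad.X (F : Quad n1 n2 n3 r1 r2 r3) : Tensor n1 n2 n3 := tucker F.U F.V F.W F.S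

def breveU (F : Quad n1 n2 n3 r1 r2 r3) : Matrix (Fin n3 × Fin n2) (Fin r1) ℝ :=
  (F.W ⊗ₖ F.V) * (M1 F.S)ᵀ

def breveV (F : Quad n1 n2 n3 r1 r2 r3) : Matrix (Fin n3 × Fin n1) (Fin r2) ℝ :=
  (F.W ⊗ₖ F.U) * (M2 F.S)ᵀ

def breveW (F : Quad n1 n2 n3 r1 r2 r3) : Matrix (Fin n2 × Fin n1) (Fin r3) ℝ :=
  (F.V ⊗ₖ F.U) * (M3 F.S)ᵀ


/-- a tangent-space style tensor (used in Lemma on tangent concentration) -/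
def tangentT (Fs : Quad n1 n2 n3 r1 r2 r3) (U' : Matrix (Fin n1) (Fin r1) ℝ)
    (V' : Matrix (Fin n2) (Fin r2) ℝ) (W' : Matrix (Fin n3) (Fin r3) ℝ)
    (S1 S2 S3 : Tensor r1 r2 r3) : Tensor n1 n2 n3 :=
  tucker U' Fs.V Fs.W S1 + tucker Fs.U V' Fs.W S2 + tucker Fs.U Fs.V W' S3

/-- squared scaled distance (infimum over invertible alignment matrices) -/
def distSq (σ1 : Fin r1 → ℝ) (σ2 : Fin r2 → ℝ) (σ3 : Fin r3 → ℝ)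
    (F Fs : Quad n1 n2 n3 r1 r2 r3) : ℝ :=
  sInf { d : ℝ | ∃ (Q1 : Matrix (Fin r1) (Fin r1) ℝ) (Q2 : Matrix (Fin r2) (Fin r2) ℝ)
      (Q3 : Matrix (Fin r3) (Fin r3) ℝ), IsUnit Q1.det ∧ IsUnit Q2.det ∧ IsUnit Q3.det ∧
      d = (frob ((F.U * Q1 - Fs.U) * Matrix.diagonal σ1)) ^ 2
        + (frob ((F.V * Q2 - Fs.V) * Matrix.diagonal σ2)) ^ 2
        + (frob ((F.W * Q3 - Fs.W) * Matrix.diagonal σ3)) ^ 2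
        + (frobT (tucker Q1⁻¹ Q2⁻¹ Q3⁻¹ F.S - Fs.S)) ^ 2 }

def dist (σ1 : Fin r1 → ℝ) (σ2 : Fin r2 → ℝ) (σ3 : Fin r3 → ℝ)
    (F Fs : Quad n1 n2 n3 r1 r2 r3) : ℝ :=
  Real.sqrt (distSq σ1 σ2 σ3 F Fs)

def firstVal {r : ℕ} (σ : Fin r → ℝ) : ℝ := if h : 0 < r then σ ⟨0, h⟩ else 0

def lastVal {r : ℕ} (σ : Fin r → ℝ) : ℝ := if h : 0 < r then σ ⟨r - 1, by omega⟩ else 0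

def sigmaMax (σ1 : Fin r1 → ℝ) (σ2 : Fin r2 → ℝ) (σ3 : Fin r3 → ℝ) : ℝ :=
  max (firstVal σ1) (max (firstVal σ2) (firstVal σ3))

def sigmaMin (σ1 : Fin r1 → ℝ) (σ2 : Fin r2 → ℝ) (σ3 : Fin r3 → ℝ) : ℝ :=
  min (lastVal σ1) (min (lastVal σ2) (lastVal σ3))

def kappa (σ1 : Fin r1 → ℝ) (σ2 : Fin r2 → ℝ) (σ3 : Fin r3 → ℝ) : ℝ :=
  sigmaMax σ1 σ2 σ3 / sigmaMin σ1 σ2 σ3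

def nmax (n1 n2 n3 : ℕ) : ℕ := max n1 (max n2 n3)

/-- the ground truth structural assumptions: orthonormal factors, and the core tensor
matricizations have Gram matrix `Σ⋆ₖ²` where the `σk` are positive and decreasing
(i.e. they are the nonzero singular values of `M_k(X⋆)` in decreasing order). -/
def GroundTruth (σ1 : Fin r1 → ℝ) (σ2 : Fin r2 → ℝ) (σ3 : Fin r3 → ℝ)
    (Fs : Quad n1 n2 n3 r1 r2 r3) : Prop :=
  (Fs.U)ᵀ * Fs.U = 1 ∧ (Fs.V)ᵀ * Fs.V = 1 ∧ (Fs.W)ᵀ * Fs.W = 1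
  ∧ M1 Fs.S * (M1 Fs.S)ᵀ = Matrix.diagonal (fun i => (σ1 i) ^ 2)
  ∧ M2 Fs.S * (M2 Fs.S)ᵀ = Matrix.diagonal (fun i => (σ2 i) ^ 2)
  ∧ M3 Fs.S * (M3 Fs.S)ᵀ = Matrix.diagonal (fun i => (σ3 i) ^ 2)
  ∧ (∀ i, 0 < σ1 i) ∧ (∀ i, 0 < σ2 i) ∧ (∀ i, 0 < σ3 i)
  ∧ (∀ i j : Fin r1, i ≤ j → σ1 j ≤ σ1 i)
  ∧ (∀ i j : Fin r2, i ≤ j → σ2 j ≤ σ2 i)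
  ∧ (∀ i j : Fin r3, i ≤ j → σ3 j ≤ σ3 i)

/-- μ-incoherence of the ground truth -/
def Incoherent (μ : ℝ) (Fs : Quad n1 n2 n3 r1 r2 r3) : Prop :=
  (n1 : ℝ) / r1 * (norm2inf Fs.U) ^ 2 ≤ μ
  ∧ (n2 : ℝ) / r2 * (norm2inf Fs.V) ^ 2 ≤ μ
  ∧ (n3 : ℝ) / r3 * (norm2inf Fs.W) ^ 2 ≤ μ

/-- one scaled gradient step driven by the "error" tensor E -/
def gdStep (η : ℝ) (E : Tensor n1 n2 n3) (F : Quad n1 n2 n3 r1 r2 r3) :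
    Quad n1 n2 n3 r1 r2 r3 where
  U := F.U - η • (M1 E * breveU F * ((breveU F)ᵀ * breveU F)⁻¹)
  V := F.V - η • (M2 E * breveV F * ((breveV F)ᵀ * breveV F)⁻¹)
  W := F.W - η • (M3 E * breveW F * ((breveW F)ᵀ * breveW F)⁻¹)
  S := F.S - η • tucker (((F.U)ᵀ * F.U)⁻¹ * (F.U)ᵀ) (((F.V)ᵀ * F.V)⁻¹ * (F.V)ᵀ)
      (((F.W)ᵀ * F.W)⁻¹ * (F.W)ᵀ) E

/-- row rescaling factor `1 ∧ B/x` (with the degenerate case x = 0 giving factor 1) -/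
def scaleFac (B : ℝ) (n : ℕ) (x : ℝ) : ℝ :=
  if Real.sqrt n * x = 0 then 1 else min 1 (B / (Real.sqrt n * x))

/-- the scaled projection P_B -/
def scaledProj (B : ℝ) (F : Quad n1 n2 n3 r1 r2 r3) : Quad n1 n2 n3 r1 r2 r3 where
  U := Matrix.of fun i j => scaleFac B n1 (rowNorm (F.U * (breveU F)ᵀ) i) * F.U i j
  V := Matrix.of fun i j => scaleFac B n2 (rowNorm (F.V * (breveV F)ᵀ) i) * F.V i j
  W := Matrix.of fun i j => scaleFac B n3 (rowNorm (F.W * (breveW F)ᵀ) i) * F.W i j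
  S := F.S

def IncoherenceCond (B : ℝ) (F : Quad n1 n2 n3 r1 r2 r3) : Prop :=
  Real.sqrt n1 * norm2inf (F.U * (breveU F)ᵀ) ≤ B
  ∧ Real.sqrt n2 * norm2inf (F.V * (breveV F)ᵀ) ≤ B
  ∧ Real.sqrt n3 * norm2inf (F.W * (breveW F)ᵀ) ≤ B

/-- P_Ω : keep the observed entries, zero elsewhere -/
def sampleT (ω : Fin n1 × Fin n2 × Fin n3 → Bool) (X : Tensor n1 n2 n3) : Tensor n1 n2 n3 :=
  fun i1 i2 i3 => if ω (i1, i2, i3) then X i1 i2 i3 else 0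

/-- Bernoulli(p) distribution on Bool -/
def bernoulliBool (p : ℝ) : Measure Bool :=
  (Real.toNNReal p) • Measure.dirac true + (Real.toNNReal (1 - p)) • Measure.dirac false

instance (p : ℝ) : IsFiniteMeasure (bernoulliBool p) := by
  unfold bernoulliBool; infer_instance

/-- i.i.d. Bernoulli sampling of the indices -/
def berMeasure (n1 n2 n3 : ℕ) (p : ℝ) : Measure (Fin n1 × Fin n2 × Fin n3 → Bool) :=
  Measure.pi fun _ => bernoulliBool p

/-- zero out the diagonal of a square matrix -/
def offdiag {N : Type*} [DecidableEq N] (G : Matrix N N ℝ) : Matrix N N ℝ :=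
  Matrix.of fun i j => if i = j then 0 else G i j

/-- `U` consists of (some choice of) top-r eigenvectors of the symmetric matrix G:
orthonormal columns which are eigenvectors, such that any eigenvector orthogonal to
all columns of U has eigenvalue no larger than the eigenvalues of the columns. -/
def IsTopEigenvectors {N : Type*} [Fintype N] {r : ℕ} (G : Matrix N N ℝ)
    (U : Matrix N (Fin r) ℝ) : Prop :=
  Uᵀ * U = 1 ∧ ∃ μ : Fin r → ℝ,
    (∀ j, G.mulVec (fun i => U i j) = μ j • (fun i => U i j))
    ∧ ∀ (v : N → ℝ) (lam : ℝ), v ≠ 0 → G.mulVec v = lam • v →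
        (∀ j, ∑ i, v i * U i j = 0) → ∀ j, lam ≤ μ j

/-- spectral initialization (before projection) for tensor completion -/
def SpectralInitTC (p : ℝ) (Y : Tensor n1 n2 n3) (F : Quad n1 n2 n3 r1 r2 r3) : Prop :=
  IsTopEigenvectors (offdiag ((p ^ 2)⁻¹ • (M1 Y * (M1 Y)ᵀ))) F.U
  ∧ IsTopEigenvectors (offdiag ((p ^ 2)⁻¹ • (M2 Y * (M2 Y)ᵀ))) F.V
  ∧ IsTopEigenvectors (offdiag ((p ^ 2)⁻¹ • (M3 Y * (M3 Y)ᵀ))) F.W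
  ∧ F.S = p⁻¹ • tucker (F.U)ᵀ (F.V)ᵀ (F.W)ᵀ Y

/-- HOSVD with multilinear rank (r1,r2,r3) -/
def IsHOSVD (X : Tensor n1 n2 n3) (F : Quad n1 n2 n3 r1 r2 r3) : Prop :=
  IsTopEigenvectors (M1 X * (M1 X)ᵀ) F.U
  ∧ IsTopEigenvectors (M2 X * (M2 X)ᵀ) F.V
  ∧ IsTopEigenvectors (M3 X * (M3 X)ᵀ) F.W
  ∧ F.S = tucker (F.U)ᵀ (F.V)ᵀ (F.W)ᵀ X

/-- the measurement map A -/
def Amap {m : ℕ} (Ad : Fin m → Tensor n1 n2 n3) (X : Tensor n1 n2 n3) : Fin m → ℝ :=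
  fun i => innerT (Ad i) X

/-- the adjoint A* -/
def Aadj {m : ℕ} (Ad : Fin m → Tensor n1 n2 n3) (y : Fin m → ℝ) : Tensor n1 n2 n3 :=
  fun i1 i2 i3 => ∑ i, y i * Ad i i1 i2 i3

/-- Gaussian design: all entries of the m measurement tensors are i.i.d. N(0,1/m) -/
def gaussDesign (m n1 n2 n3 : ℕ) : Measure (Fin m → Tensor n1 n2 n3) :=
  Measure.pi fun _ => Measure.pi fun _ => Measure.pi fun _ => Measure.pi fun _ =>
    ProbabilityTheory.gaussianReal 0 (m : NNReal)⁻¹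

/-- tensor restricted isometry property -/
def TRIP {m : ℕ} (Ad : Fin m → Tensor n1 n2 n3) (r1' r2' r3' : ℕ) (δ : ℝ) : Prop :=
  ∀ X : Tensor n1 n2 n3, (M1 X).rank ≤ r1' → (M2 X).rank ≤ r2' → (M3 X).rank ≤ r3' →
    (1 - δ) * (frobT X) ^ 2 ≤ ∑ i, (innerT (Ad i) X) ^ 2
    ∧ ∑ i, (innerT (Ad i) X) ^ 2 ≤ (1 + δ) * (frobT X) ^ 2

/-- ε-closeness in the aligned sense -/
def alignedClose (σ1 : Fin r1 → ℝ) (σ2 : Fin r2 → ℝ) (σ3 : Fin r3 → ℝ)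
    (F Fs : Quad n1 n2 n3 r1 r2 r3) (ε : ℝ) : Prop :=
  (frob ((F.U - Fs.U) * Matrix.diagonal σ1)) ^ 2
  + (frob ((F.V - Fs.V) * Matrix.diagonal σ2)) ^ 2
  + (frob ((F.W - Fs.W) * Matrix.diagonal σ3)) ^ 2
  + (frobT (F.S - Fs.S)) ^ 2 ≤ ε ^ 2 * (sigmaMin σ1 σ2 σ3) ^ 2

/-- the alignment equations -/
def AlignEqs (σ1 : Fin r1 → ℝ) (σ2 : Fin r2 → ℝ) (σ3 : Fin r3 → ℝ)
    (F Fs : Quad n1 n2 n3 r1 r2 r3) : Prop :=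
  (F.U)ᵀ * (F.U - Fs.U) * (Matrix.diagonal σ1 * Matrix.diagonal σ1)
      = M1 (F.S - Fs.S) * (M1 F.S)ᵀ
  ∧ (F.V)ᵀ * (F.V - Fs.V) * (Matrix.diagonal σ2 * Matrix.diagonal σ2)
      = M2 (F.S - Fs.S) * (M2 F.S)ᵀ
  ∧ (F.W)ᵀ * (F.W - Fs.W) * (Matrix.diagonal σ3 * Matrix.diagonal σ3)
      = M3 (F.S - Fs.S) * (M3 F.S)ᵀ

/-- `(UᵀU)^{-1/2}`: inverse of the positive semidefinite square root of the Gram matrix -/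
def invSqrtGram {m r : ℕ} (U : Matrix (Fin m) (Fin r) ℝ) : Matrix (Fin r) (Fin r) ℝ :=
  if h : (Uᵀ * U).PosSemidef then
    (h.1.eigenvectorUnitary.1 * diagonal ((↑) ∘ (√·) ∘ h.1.eigenvalues) *
      (star h.1.eigenvectorUnitary : Matrix (Fin r) (Fin r) ℝ))⁻¹ else 1

end


set_option maxHeartbeats 1000000
set_option linter.unusedSectionVars false

section FrobLemmas

open Matrix
variable {m n p q : Type*} [Fintype m] [Fintype n] [Fintype p] [Fintype q]

lemma frob_nonneg (A : Matrix m n ℝ) : 0 ≤ frob A := Real.sqrt_nonneg _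

lemma frob_sq (A : Matrix m n ℝ) : frob A ^ 2 = ∑ i, ∑ j, (A i j) ^ 2 :=
  Real.sq_sqrt (by positivity)

lemma frobT_nonneg {n1 n2 n3 : ℕ} (X : Tensor n1 n2 n3) : 0 ≤ frobT X := Real.sqrt_nonneg _

lemma innerM_eq_trace [DecidableEq m] (A B : Matrix m n ℝ) :
    innerM A B = (A * Bᵀ).trace := by
  simp [innerM, Matrix.trace, Matrix.mul_apply, Matrix.diag]

lemma innerM_self (A : Matrix m n ℝ) : innerM A A = frob A ^ 2 := by
  rw [frob_sq]; simp [innerM, sq]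

lemma frob_eq_of_sq_eq {A : Matrix m n ℝ} {B : Matrix p q ℝ}
    (h : frob A ^ 2 = frob B ^ 2) : frob A = frob B := by
  have h1 : Real.sqrt (frob A ^ 2) = Real.sqrt (frob B ^ 2) := by rw [h]
  rwa [Real.sqrt_sq (frob_nonneg A), Real.sqrt_sq (frob_nonneg B)] at h1

lemma frob_sq_eq_trace {mm : Type*} [Fintype mm] [DecidableEq mm] {nn : Type*} [Fintype nn] (A : Matrix mm nn ℝ) :
    frob A ^ 2 = (A * Aᵀ).trace := by
  rw [← innerM_eq_trace, innerM_self]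

lemma frob_transpose (A : Matrix m n ℝ) : frob Aᵀ = frob A := by
  unfold frob
  rw [Finset.sum_comm]
  rfl

lemma abs_innerM_le (A B : Matrix m n ℝ) : |innerM A B| ≤ frob A * frob B := by
  have key : innerM A B ^ 2 ≤ (∑ i, ∑ j, (A i j) ^ 2) * (∑ i, ∑ j, (B i j) ^ 2) := by
    have h := Finset.sum_mul_sq_le_sq_mul_sq Finset.univ
      (fun p : m × n => A p.1 p.2) (fun p : m × n => B p.1 p.2)
    simpa [innerM, Fintype.sum_prod_type] using h
  have : innerM A B ^ 2 ≤ (frob A * frob B) ^ 2 := by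
    rw [mul_pow, frob_sq, frob_sq]; exact key
  calc |innerM A B| = Real.sqrt (innerM A B ^ 2) := (Real.sqrt_sq_eq_abs _).symm
    _ ≤ Real.sqrt ((frob A * frob B) ^ 2) := Real.sqrt_le_sqrt this
    _ = frob A * frob B :=
        Real.sqrt_sq (mul_nonneg (frob_nonneg _) (frob_nonneg _))

lemma frob_mul_le (A : Matrix m n ℝ) (B : Matrix n p ℝ) :
    frob (A * B) ≤ frob A * frob B := by
  have key : frob (A * B) ^ 2 ≤ (frob A * frob B) ^ 2 := by
    rw [mul_pow, frob_sq]
    calc ∑ i, ∑ k, ((A * B) i k) ^ 2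
        ≤ ∑ i, ∑ k, (∑ j, (A i j) ^ 2) * (∑ j, (B j k) ^ 2) := by
          refine Finset.sum_le_sum fun i _ => Finset.sum_le_sum fun k _ => ?_
          simpa [Matrix.mul_apply] using
            Finset.sum_mul_sq_le_sq_mul_sq Finset.univ (fun j => A i j) (fun j => B j k)
      _ = (∑ i, ∑ j, (A i j) ^ 2) * (∑ k, ∑ j, (B j k) ^ 2) :=
          (Finset.sum_mul_sum Finset.univ Finset.univ (fun i => ∑ j, (A i j) ^ 2) (fun k => ∑ j, (B j k) ^ 2)).symm
      _ = frob A ^ 2 * frob B ^ 2 := by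
          rw [frob_sq, frob_sq, Finset.sum_comm (f := fun k j => (B j k) ^ 2)]
  calc frob (A * B) = Real.sqrt (frob (A * B) ^ 2) := (Real.sqrt_sq (frob_nonneg _)).symm
    _ ≤ Real.sqrt ((frob A * frob B) ^ 2) := Real.sqrt_le_sqrt key
    _ = frob A * frob B :=
        Real.sqrt_sq (mul_nonneg (frob_nonneg _) (frob_nonneg _))

lemma frob_add_le (A B : Matrix m n ℝ) : frob (A + B) ≤ frob A + frob B := by
  have key : frob (A + B) ^ 2 ≤ (frob A + frob B) ^ 2 := by
    have hab : innerM A B ≤ frob A * frob B := (abs_le.mp (abs_innerM_le A B)).2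
    have expand : frob (A + B) ^ 2 = frob A ^ 2 + 2 * innerM A B + frob B ^ 2 := by
      rw [← innerM_self, ← innerM_self, ← innerM_self]
      have h : ∀ i j, (A i j + B i j) * (A i j + B i j)
          = A i j * A i j + 2 * (A i j * B i j) + B i j * B i j := fun i j => by ring
      simp only [innerM, Matrix.add_apply, h, Finset.sum_add_distrib, Finset.mul_sum]
    rw [expand]; nlinarith [frob_nonneg A, frob_nonneg B]
  calc frob (A + B) = Real.sqrt (frob (A + B) ^ 2) := (Real.sqrt_sq (frob_nonneg _)).symm
    _ ≤ Real.sqrt ((frob A + frob B) ^ 2) := Real.sqrt_le_sqrt key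
    _ = frob A + frob B :=
        Real.sqrt_sq (add_nonneg (frob_nonneg _) (frob_nonneg _))

end FrobLemmas
section Tier2

open Matrix
variable {m n p q : Type*} [Fintype m] [Fintype n] [Fintype p] [Fintype q]
  [DecidableEq m] [DecidableEq n] [DecidableEq p]

lemma frob_neg (A : Matrix m n ℝ) : frob (-A) = frob A := by
  unfold frob; simp

lemma frob_sub_le (A B : Matrix m n ℝ) : frob (A - B) ≤ frob A + frob B := by
  rw [sub_eq_add_neg]
  exact (frob_add_le A (-B)).trans (by rw [frob_neg])

lemma innerM_sub_self (A B : Matrix m n ℝ) :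
    innerM (A - B) (A - B) = innerM A A - 2 * innerM A B + innerM B B := by
  have h : ∀ i j, (A i j - B i j) * (A i j - B i j)
      = A i j * A i j - 2 * (A i j * B i j) + B i j * B i j := fun i j => by ring
  simp only [innerM, Matrix.sub_apply, h, Finset.sum_add_distrib, Finset.sum_sub_distrib,
    Finset.mul_sum]

lemma frob_mul_diag_sq (A : Matrix m n ℝ) (d : n → ℝ) :
    frob (A * Matrix.diagonal d) ^ 2 = ∑ j, (d j) ^ 2 * ∑ i, (A i j) ^ 2 := by
  rw [frob_sq, Finset.sum_comm]
  refine Finset.sum_congr rfl fun j _ => ?_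
  rw [Finset.mul_sum]
  refine Finset.sum_congr rfl fun i _ => ?_
  rw [Matrix.mul_diagonal]
  ring

lemma mul_frob_le_frob_mul_diag (A : Matrix m n ℝ) (d : n → ℝ) {c : ℝ}
    (hc : 0 ≤ c) (hd : ∀ j, c ≤ d j) :
    c * frob A ≤ frob (A * Matrix.diagonal d) := by
  have key : (c * frob A) ^ 2 ≤ frob (A * Matrix.diagonal d) ^ 2 := by
    have h0 : frob A ^ 2 = ∑ j, ∑ i, (A i j) ^ 2 := by
      rw [frob_sq]; exact Finset.sum_comm
    rw [mul_pow, h0, frob_mul_diag_sq, Finset.mul_sum]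
    refine Finset.sum_le_sum fun j _ => ?_
    have h1 : c ^ 2 ≤ (d j) ^ 2 := by nlinarith [hd j]
    have hnn : (0:ℝ) ≤ ∑ i, (A i j) ^ 2 := by positivity
    nlinarith
  calc c * frob A = Real.sqrt ((c * frob A) ^ 2) :=
        (Real.sqrt_sq (mul_nonneg hc (frob_nonneg _))).symm
    _ ≤ Real.sqrt (frob (A * Matrix.diagonal d) ^ 2) := Real.sqrt_le_sqrt key
    _ = _ := Real.sqrt_sq (frob_nonneg _)

lemma frob_orth_left {U : Matrix m n ℝ} (hU : Uᵀ * U = 1) (A : Matrix n p ℝ) :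
    frob (U * A) = frob A := by
  refine frob_eq_of_sq_eq ?_
  rw [frob_sq_eq_trace, frob_sq_eq_trace]
  have : U * A * (U * A)ᵀ = U * (A * Aᵀ * Uᵀ) := by
    simp only [Matrix.transpose_mul, Matrix.mul_assoc]
  rw [this, Matrix.trace_mul_comm, Matrix.mul_assoc (A * Aᵀ), hU, Matrix.mul_one]

lemma frob_orthT_le {U : Matrix m n ℝ} (hU : Uᵀ * U = 1) (A : Matrix m p ℝ) :
    frob (Uᵀ * A) ≤ frob A := by
  set P : Matrix m m ℝ := U * Uᵀ with hP
  have hPt : Pᵀ = P := by rw [hP, Matrix.transpose_mul, Matrix.transpose_transpose]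
  have hPA : P * A = U * (Uᵀ * A) := by rw [hP, Matrix.mul_assoc]
  have h1 : frob (Uᵀ * A) = frob (P * A) := by rw [hPA, frob_orth_left hU]
  set t : ℝ := (A * Aᵀ * P).trace with ht
  have hAPA : innerM A (P * A) = t := by
    rw [innerM_eq_trace, Matrix.transpose_mul, hPt]
    rw [ht, Matrix.mul_assoc]
  have hPP : innerM (P * A) (P * A) = t := by
    rw [innerM_eq_trace, Matrix.transpose_mul, hPt]
    have : P * A * (Aᵀ * P) = P * (A * Aᵀ * P) := by simp only [Matrix.mul_assoc]
    rw [this, Matrix.trace_mul_comm, ht]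
    have : A * Aᵀ * P * P = A * Aᵀ * P := by
      rw [hP]
      have : U * Uᵀ * (U * Uᵀ) = U * Uᵀ := by
        rw [Matrix.mul_assoc, ← Matrix.mul_assoc Uᵀ U, hU, Matrix.one_mul]
      rw [Matrix.mul_assoc (A * Aᵀ), this]
    rw [Matrix.mul_assoc, ← Matrix.mul_assoc, this]
  have hexp := innerM_sub_self A (P * A)
  have hnn : 0 ≤ innerM (A - P * A) (A - P * A) := by rw [innerM_self]; positivity
  rw [hexp, hAPA, hPP, innerM_self] at hnn
  have key : frob (Uᵀ * A) ^ 2 ≤ frob A ^ 2 := by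
    rw [h1, ← innerM_self, hPP]; linarith
  calc frob (Uᵀ * A) = Real.sqrt (frob (Uᵀ * A) ^ 2) := (Real.sqrt_sq (frob_nonneg _)).symm
    _ ≤ Real.sqrt (frob A ^ 2) := Real.sqrt_le_sqrt key
    _ = frob A := Real.sqrt_sq (frob_nonneg _)

lemma frob_inv_mul_le {M : Matrix n n ℝ} (hdet : IsUnit M.det)
    (hM : frob (M - 1) ≤ 1 / 2) (C : Matrix n p ℝ) :
    frob (M⁻¹ * C) ≤ 2 * frob C := by
  have hid : M⁻¹ * C = C - (M - 1) * (M⁻¹ * C) := by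
    rw [Matrix.sub_mul, Matrix.one_mul, ← Matrix.mul_assoc, Matrix.mul_nonsing_inv _ hdet,
      Matrix.one_mul, sub_sub_cancel]
  have h1 : frob (M⁻¹ * C) ≤ frob C + frob ((M - 1) * (M⁻¹ * C)) := by
    calc frob (M⁻¹ * C) = frob (C - (M - 1) * (M⁻¹ * C)) := by rw [← hid]
      _ ≤ _ := frob_sub_le _ _
  have h2 : frob ((M - 1) * (M⁻¹ * C)) ≤ (1 / 2) * frob (M⁻¹ * C) :=
    (frob_mul_le _ _).trans (by
      have := frob_nonneg (M⁻¹ * C)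
      nlinarith)
  linarith

lemma abs_dot_mulVec_le (E : Matrix n n ℝ) (x : n → ℝ) :
    |x ⬝ᵥ E.mulVec x| ≤ frob E * (∑ i, (x i) ^ 2) := by
  have hy : ∀ i, (E.mulVec x i) ^ 2 ≤ (∑ j, (E i j) ^ 2) * (∑ j, (x j) ^ 2) := by
    intro i
    simpa [Matrix.mulVec, dotProduct] using
      Finset.sum_mul_sq_le_sq_mul_sq Finset.univ (fun j => E i j) x
  have key : (x ⬝ᵥ E.mulVec x) ^ 2 ≤ (frob E * (∑ i, (x i) ^ 2)) ^ 2 := by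
    have h1 : (x ⬝ᵥ E.mulVec x) ^ 2 ≤ (∑ i, (x i) ^ 2) * (∑ i, (E.mulVec x i) ^ 2) := by
      simpa [dotProduct] using
        Finset.sum_mul_sq_le_sq_mul_sq Finset.univ x (fun i => E.mulVec x i)
    have h2 : (∑ i, (E.mulVec x i) ^ 2) ≤ frob E ^ 2 * (∑ j, (x j) ^ 2) := by
      rw [frob_sq, Finset.sum_mul]
      exact Finset.sum_le_sum fun i _ => hy i
    have hx : (0:ℝ) ≤ ∑ i, (x i) ^ 2 := by positivity
    calc (x ⬝ᵥ E.mulVec x) ^ 2 ≤ (∑ i, (x i) ^ 2) * (∑ i, (E.mulVec x i) ^ 2) := h1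
      _ ≤ (∑ i, (x i) ^ 2) * (frob E ^ 2 * (∑ j, (x j) ^ 2)) := by
          exact mul_le_mul_of_nonneg_left h2 hx
      _ = (frob E * (∑ i, (x i) ^ 2)) ^ 2 := by ring
  calc |x ⬝ᵥ E.mulVec x| = Real.sqrt ((x ⬝ᵥ E.mulVec x) ^ 2) := (Real.sqrt_sq_eq_abs _).symm
    _ ≤ Real.sqrt ((frob E * (∑ i, (x i) ^ 2)) ^ 2) := Real.sqrt_le_sqrt key
    _ = frob E * (∑ i, (x i) ^ 2) := Real.sqrt_sq (mul_nonneg (frob_nonneg E) (by positivity))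

lemma posDef_of_near_one {M : Matrix n n ℝ} (hsym : Mᵀ = M)
    (h : frob (M - 1) ≤ 1 / 2) : M.PosDef := by
  refine Matrix.PosDef.of_dotProduct_mulVec_pos ?_ ?_
  · rw [Matrix.IsHermitian, Matrix.conjTranspose_eq_transpose_of_trivial, hsym]
  · intro x hx
    have hxx : (0:ℝ) < ∑ i, (x i) ^ 2 := by
      obtain ⟨i, hi⟩ := Function.ne_iff.mp hx
      exact Finset.sum_pos' (fun _ _ => sq_nonneg _)
        ⟨i, Finset.mem_univ i, (sq_nonneg (x i)).lt_of_ne (Ne.symm (pow_ne_zero 2 hi))⟩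
    have hsplit : x ⬝ᵥ M.mulVec x = (∑ i, (x i) ^ 2) + x ⬝ᵥ (M - 1).mulVec x := by
      have h1 : (M - 1).mulVec x = M.mulVec x - x := by
        rw [Matrix.sub_mulVec, Matrix.one_mulVec]
      have h2 : x ⬝ᵥ x = ∑ i, (x i) ^ 2 := by simp [dotProduct, sq]
      rw [h1, dotProduct_sub, h2]; ring
    have habs := abs_dot_mulVec_le (M - 1) x
    have hEx : |x ⬝ᵥ (M - 1).mulVec x| ≤ (1 / 2) * (∑ i, (x i) ^ 2) := by
      calc |x ⬝ᵥ (M - 1).mulVec x| ≤ frob (M - 1) * (∑ i, (x i) ^ 2) := habs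
        _ ≤ (1 / 2) * (∑ i, (x i) ^ 2) := by nlinarith
    have := abs_le.mp hEx
    simp only [star_trivial]
    rw [hsplit]
    linarith [this.1]

end Tier2
section Tier3

open Matrix
open scoped Kronecker

variable {na nb nc : Type*} [Fintype na] [Fintype nb] [Fintype nc]

lemma sum3_mid (f : na → nb → nc → ℝ) :
    ∑ a, ∑ b, ∑ c, f a b c = ∑ b, ∑ c, ∑ a, f a b c :=
  calc ∑ a, ∑ b, ∑ c, f a b c = ∑ b, ∑ a, ∑ c, f a b c := Finset.sum_comm
    _ = ∑ b, ∑ c, ∑ a, f a b c := Finset.sum_congr rfl fun _ _ => Finset.sum_comm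

lemma sum3_rot (f : na → nb → nc → ℝ) :
    ∑ a, ∑ b, ∑ c, f a b c = ∑ c, ∑ a, ∑ b, f a b c := by
  rw [sum3_mid, sum3_mid]

lemma sum3_swap (f : na → nb → nc → ℝ) :
    ∑ a, ∑ b, ∑ c, f a b c = ∑ b, ∑ a, ∑ c, f a b c := Finset.sum_comm

lemma sum3_rev (f : na → nb → nc → ℝ) :
    ∑ a, ∑ b, ∑ c, f a b c = ∑ c, ∑ b, ∑ a, f a b c :=
  calc ∑ a, ∑ b, ∑ c, f a b c = ∑ c, ∑ a, ∑ b, f a b c := by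
        rw [sum3_mid, sum3_mid]
    _ = ∑ c, ∑ b, ∑ a, f a b c := Finset.sum_congr rfl fun _ _ => Finset.sum_comm

variable {n1 n2 n3 m1 m2 m3 r1 r2 r3 : ℕ}

lemma frobT_eq_frob_M1 (X : Tensor n1 n2 n3) : frobT X = frob (M1 X) := by
  unfold frobT frob M1
  congr 1
  refine Finset.sum_congr rfl fun i1 _ => ?_
  rw [Fintype.sum_prod_type]
  exact Finset.sum_comm

lemma frobT_eq_frob_M2 (X : Tensor n1 n2 n3) : frobT X = frob (M2 X) := by
  unfold frobT frob M2
  congr 1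
  rw [sum3_mid (f := fun i1 i2 i3 => (X i1 i2 i3) ^ 2)]
  refine Finset.sum_congr rfl fun i2 _ => ?_
  rw [Fintype.sum_prod_type]
  rfl

lemma frobT_eq_frob_M3 (X : Tensor n1 n2 n3) : frobT X = frob (M3 X) := by
  unfold frobT frob M3
  congr 1
  rw [sum3_rev (f := fun i1 i2 i3 => (X i1 i2 i3) ^ 2)]
  refine Finset.sum_congr rfl fun i3 _ => ?_
  rw [Fintype.sum_prod_type]
  rfl

lemma innerT_eq_innerM_M1 (X Y : Tensor n1 n2 n3) : innerT X Y = innerM (M1 X) (M1 Y) := by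
  unfold innerT innerM M1
  refine Finset.sum_congr rfl fun i1 _ => ?_
  rw [Fintype.sum_prod_type]
  exact Finset.sum_comm

lemma innerT_eq_innerM_M2 (X Y : Tensor n1 n2 n3) : innerT X Y = innerM (M2 X) (M2 Y) := by
  unfold innerT innerM M2
  rw [sum3_mid (f := fun i1 i2 i3 => X i1 i2 i3 * Y i1 i2 i3)]
  refine Finset.sum_congr rfl fun i2 _ => ?_
  rw [Fintype.sum_prod_type]
  rfl

lemma innerT_eq_innerM_M3 (X Y : Tensor n1 n2 n3) : innerT X Y = innerM (M3 X) (M3 Y) := by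
  unfold innerT innerM M3
  rw [sum3_rev (f := fun i1 i2 i3 => X i1 i2 i3 * Y i1 i2 i3)]
  refine Finset.sum_congr rfl fun i3 _ => ?_
  rw [Fintype.sum_prod_type]
  rfl

lemma abs_innerT_le (X Y : Tensor n1 n2 n3) : |innerT X Y| ≤ frobT X * frobT Y := by
  rw [innerT_eq_innerM_M1, frobT_eq_frob_M1, frobT_eq_frob_M1]
  exact abs_innerM_le _ _

lemma M1_sub (X Y : Tensor n1 n2 n3) : M1 (X - Y) = M1 X - M1 Y := rfl
lemma M2_sub (X Y : Tensor n1 n2 n3) : M2 (X - Y) = M2 X - M2 Y := rfl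
lemma M3_sub (X Y : Tensor n1 n2 n3) : M3 (X - Y) = M3 X - M3 Y := rfl

lemma M1_inj {X Y : Tensor n1 n2 n3} (h : M1 X = M1 Y) : X = Y := by
  funext i1 i2 i3
  exact congrFun (congrFun h i1) (i3, i2)

lemma M1_tucker (A : Matrix (Fin m1) (Fin r1) ℝ) (B : Matrix (Fin m2) (Fin r2) ℝ)
    (C : Matrix (Fin m3) (Fin r3) ℝ) (S : Tensor r1 r2 r3) :
    M1 (tucker A B C S) = A * M1 S * (C ⊗ₖ B)ᵀ := by
  funext i p
  obtain ⟨i3, i2⟩ := p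
  show tucker A B C S i i2 i3 = _
  simp only [tucker, Matrix.mul_apply, Matrix.transpose_apply, Matrix.kroneckerMap_apply,
    M1, Matrix.of_apply, Fintype.sum_prod_type]
  rw [sum3_rev (f := fun j1 j2 j3 => A i j1 * B i2 j2 * C i3 j3 * S j1 j2 j3)]
  refine Finset.sum_congr rfl fun j3 _ => Finset.sum_congr rfl fun j2 _ => ?_
  rw [Finset.sum_mul]
  exact Finset.sum_congr rfl fun j1 _ => by ring

lemma M2_tucker (A : Matrix (Fin m1) (Fin r1) ℝ) (B : Matrix (Fin m2) (Fin r2) ℝ)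
    (C : Matrix (Fin m3) (Fin r3) ℝ) (S : Tensor r1 r2 r3) :
    M2 (tucker A B C S) = B * M2 S * (C ⊗ₖ A)ᵀ := by
  funext i p
  obtain ⟨i3, i1⟩ := p
  show tucker A B C S i1 i i3 = _
  simp only [tucker, Matrix.mul_apply, Matrix.transpose_apply, Matrix.kroneckerMap_apply,
    M2, Matrix.of_apply, Fintype.sum_prod_type]
  rw [sum3_rot (f := fun j1 j2 j3 => A i1 j1 * B i j2 * C i3 j3 * S j1 j2 j3)]
  refine Finset.sum_congr rfl fun j3 _ => Finset.sum_congr rfl fun j1' _ => ?_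
  rw [Finset.sum_mul]
  exact Finset.sum_congr rfl fun j1 _ => by ring

lemma M3_tucker (A : Matrix (Fin m1) (Fin r1) ℝ) (B : Matrix (Fin m2) (Fin r2) ℝ)
    (C : Matrix (Fin m3) (Fin r3) ℝ) (S : Tensor r1 r2 r3) :
    M3 (tucker A B C S) = C * M3 S * (B ⊗ₖ A)ᵀ := by
  funext i p
  obtain ⟨i2, i1⟩ := p
  show tucker A B C S i1 i2 i = _
  simp only [tucker, Matrix.mul_apply, Matrix.transpose_apply, Matrix.kroneckerMap_apply,
    M3, Matrix.of_apply, Fintype.sum_prod_type]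
  rw [sum3_swap (f := fun j1 j2 j3 => A i1 j1 * B i2 j2 * C i j3 * S j1 j2 j3)]
  refine Finset.sum_congr rfl fun j2 _ => Finset.sum_congr rfl fun j1' _ => ?_
  rw [Finset.sum_mul]
  exact Finset.sum_congr rfl fun j1 _ => by ring

lemma tucker_tucker (A : Matrix (Fin m1) (Fin n1) ℝ) (B : Matrix (Fin m2) (Fin n2) ℝ)
    (C : Matrix (Fin m3) (Fin n3) ℝ) (A' : Matrix (Fin n1) (Fin r1) ℝ)
    (B' : Matrix (Fin n2) (Fin r2) ℝ) (C' : Matrix (Fin n3) (Fin r3) ℝ)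
    (S : Tensor r1 r2 r3) :
    tucker A B C (tucker A' B' C' S) = tucker (A * A') (B * B') (C * C') S := by
  apply M1_inj
  rw [M1_tucker, M1_tucker, M1_tucker, Matrix.mul_kronecker_mul, Matrix.transpose_mul]
  simp only [Matrix.mul_assoc]

lemma tucker_one (S : Tensor r1 r2 r3) : tucker 1 1 1 S = S := by
  apply M1_inj
  rw [M1_tucker, Matrix.one_kronecker_one, Matrix.transpose_one, Matrix.mul_one,
    Matrix.one_mul]

lemma tucker_sub_S (A : Matrix (Fin m1) (Fin r1) ℝ) (B : Matrix (Fin m2) (Fin r2) ℝ)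
    (C : Matrix (Fin m3) (Fin r3) ℝ) (S S' : Tensor r1 r2 r3) :
    tucker A B C (S - S') = tucker A B C S - tucker A B C S' := by
  funext i1 i2 i3
  simp [tucker, Pi.sub_apply, mul_sub, Finset.sum_sub_distrib]

lemma tucker_sub_left (A A' : Matrix (Fin m1) (Fin r1) ℝ) (B : Matrix (Fin m2) (Fin r2) ℝ)
    (C : Matrix (Fin m3) (Fin r3) ℝ) (S : Tensor r1 r2 r3) :
    tucker (A - A') B C S = tucker A B C S - tucker A' B C S := by
  funext i1 i2 i3
  simp only [tucker, Pi.sub_apply, Matrix.sub_apply, mul_sub, sub_mul,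
    Finset.sum_sub_distrib]

lemma tucker_sub_mid (A : Matrix (Fin m1) (Fin r1) ℝ) (B B' : Matrix (Fin m2) (Fin r2) ℝ)
    (C : Matrix (Fin m3) (Fin r3) ℝ) (S : Tensor r1 r2 r3) :
    tucker A (B - B') C S = tucker A B C S - tucker A B' C S := by
  funext i1 i2 i3
  simp only [tucker, Pi.sub_apply, Matrix.sub_apply, mul_sub, sub_mul,
    Finset.sum_sub_distrib]

lemma tucker_sub_right (A : Matrix (Fin m1) (Fin r1) ℝ) (B : Matrix (Fin m2) (Fin r2) ℝ)
    (C C' : Matrix (Fin m3) (Fin r3) ℝ) (S : Tensor r1 r2 r3) :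
    tucker A B (C - C') S = tucker A B C S - tucker A B C' S := by
  funext i1 i2 i3
  simp only [tucker, Pi.sub_apply, Matrix.sub_apply, mul_sub, sub_mul,
    Finset.sum_sub_distrib]

lemma innerT_sub (X Y Z : Tensor n1 n2 n3) :
    innerT X (Y - Z) = innerT X Y - innerT X Z := by
  simp only [innerT, Pi.sub_apply, mul_sub, Finset.sum_sub_distrib]

lemma innerT_add (X Y Z : Tensor n1 n2 n3) :
    innerT X (Y + Z) = innerT X Y + innerT X Z := by
  simp only [innerT, Pi.add_apply, mul_add, Finset.sum_add_distrib]

end Tier3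
section Tier4

open Matrix
variable {q : Type*} [Fintype q]

lemma gram_psd {m r : ℕ} (U : Matrix (Fin m) (Fin r) ℝ) : (Uᵀ * U).PosSemidef := by
  have h := Matrix.posSemidef_conjTranspose_mul_self U
  rwa [Matrix.conjTranspose_eq_transpose_of_trivial] at h

noncomputable def gramSqrt {m r : ℕ} (U : Matrix (Fin m) (Fin r) ℝ) : Matrix (Fin r) (Fin r) ℝ :=
  (gram_psd U).1.eigenvectorUnitary.1 * diagonal ((↑) ∘ (√·) ∘ (gram_psd U).1.eigenvalues) *
    (star (gram_psd U).1.eigenvectorUnitary : Matrix (Fin r) (Fin r) ℝ)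

lemma gramSqrt_transpose {m r : ℕ} (U : Matrix (Fin m) (Fin r) ℝ) :
    (gramSqrt U)ᵀ = gramSqrt U := by
  rw [← Matrix.conjTranspose_eq_transpose_of_trivial]
  simp only [gramSqrt, Matrix.conjTranspose_mul, Unitary.coe_star, Matrix.star_eq_conjTranspose,
    Matrix.conjTranspose_conjTranspose, Matrix.diagonal_conjTranspose, star_trivial,
    Matrix.mul_assoc]

lemma gramSqrt_mul_self {m r : ℕ} (U : Matrix (Fin m) (Fin r) ℝ) :
    gramSqrt U * gramSqrt U = Uᵀ * U := by
  have h := gram_psd U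
  conv_rhs => rw [(gram_psd U).1.spectral_theorem]
  rw [Unitary.conjStarAlgAut_apply]
  have hQ : (star (gram_psd U).1.eigenvectorUnitary : Matrix (Fin r) (Fin r) ℝ)
      * (gram_psd U).1.eigenvectorUnitary.1 = 1 := Unitary.coe_star_mul_self _
  have hD : diagonal ((↑) ∘ (√·) ∘ (gram_psd U).1.eigenvalues)
      * diagonal ((↑) ∘ (√·) ∘ (gram_psd U).1.eigenvalues)
      = diagonal (RCLike.ofReal ∘ (gram_psd U).1.eigenvalues : Fin r → ℝ) := by
    rw [Matrix.diagonal_mul_diagonal]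
    congr 1
    funext i
    simp only [Function.comp_apply, RCLike.ofReal_real_eq_id, id]
    exact Real.mul_self_sqrt ((gram_psd U).eigenvalues_nonneg i)
  simp only [gramSqrt, Matrix.mul_assoc]
  rw [← Matrix.mul_assoc (star _ : Matrix (Fin r) (Fin r) ℝ), hQ, Matrix.one_mul,
    ← Matrix.mul_assoc (diagonal _), hD]

lemma invSqrtGram_eq {m r : ℕ} (U : Matrix (Fin m) (Fin r) ℝ) :
    invSqrtGram U = (gramSqrt U)⁻¹ := dif_pos (gram_psd U)

lemma invSqrtGram_transpose {m r : ℕ} (U : Matrix (Fin m) (Fin r) ℝ) :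
    (invSqrtGram U)ᵀ = invSqrtGram U := by
  have hsymm : (gramSqrt U)ᵀ = gramSqrt U := gramSqrt_transpose U
  rw [invSqrtGram_eq, Matrix.transpose_nonsing_inv, hsymm]

lemma invSqrtGram_mul_self {m r : ℕ} (U : Matrix (Fin m) (Fin r) ℝ) :
    invSqrtGram U * invSqrtGram U = (Uᵀ * U)⁻¹ := by
  rw [invSqrtGram_eq, ← Matrix.mul_inv_rev, gramSqrt_mul_self]

lemma frob_invSqrtGram_sq {m r : ℕ} (U : Matrix (Fin m) (Fin r) ℝ)
    (B : Matrix (Fin r) q ℝ) :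
    frob (invSqrtGram U * B) ^ 2 = (B * Bᵀ * (Uᵀ * U)⁻¹).trace := by
  rw [frob_sq_eq_trace]
  have h1 : invSqrtGram U * B * (invSqrtGram U * B)ᵀ
      = invSqrtGram U * (B * Bᵀ * invSqrtGram U) := by
    rw [Matrix.transpose_mul, invSqrtGram_transpose]
    simp only [Matrix.mul_assoc]
  rw [h1, Matrix.trace_mul_comm, Matrix.mul_assoc (B * Bᵀ), invSqrtGram_mul_self]

lemma gram_transpose {m r : ℕ} (U : Matrix (Fin m) (Fin r) ℝ) : (Uᵀ * U)ᵀ = Uᵀ * U := by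
  rw [Matrix.transpose_mul, Matrix.transpose_transpose]

lemma gram_inv_transpose {m r : ℕ} (U : Matrix (Fin m) (Fin r) ℝ) :
    ((Uᵀ * U)⁻¹)ᵀ = (Uᵀ * U)⁻¹ := by
  rw [Matrix.transpose_nonsing_inv, gram_transpose]

lemma main_term_eq {m r : ℕ} (U Δ : Matrix (Fin m) (Fin r) ℝ) (σ : Fin r → ℝ) :
    (Uᵀ * Δ * (Matrix.diagonal σ * Matrix.diagonal σ)
        * ((Uᵀ * U)⁻¹ * (Uᵀ * Δ))ᵀ).trace
      = frob (invSqrtGram U * Uᵀ * Δ * Matrix.diagonal σ) ^ 2 := by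
  have hB : invSqrtGram U * Uᵀ * Δ * Matrix.diagonal σ
      = invSqrtGram U * (Uᵀ * Δ * Matrix.diagonal σ) := by simp only [Matrix.mul_assoc]
  rw [hB, frob_invSqrtGram_sq]
  congr 1
  simp only [Matrix.transpose_mul, Matrix.transpose_transpose, Matrix.diagonal_transpose,
    gram_inv_transpose, Matrix.mul_assoc]

end Tier4
section Tier5

open Matrix
variable {q : Type*} [Fintype q] [DecidableEq q]

lemma trace_err_bound {r : ℕ} (X : Matrix (Fin r) q ℝ) (g : Matrix (Fin r) (Fin r) ℝ) :
    |(X * Xᵀ * gᵀ).trace| ≤ frob X ^ 2 * frob g := by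
  have h : (X * Xᵀ * gᵀ).trace = innerM (X * Xᵀ) g := (innerM_eq_trace _ _).symm
  rw [h]
  calc |innerM (X * Xᵀ) g| ≤ frob (X * Xᵀ) * frob g := abs_innerM_le _ _
    _ ≤ frob X * frob Xᵀ * frob g := by
        have := frob_mul_le X Xᵀ
        have := frob_nonneg g
        nlinarith
    _ = frob X ^ 2 * frob g := by rw [frob_transpose]; ring

lemma factor_facts {m r : ℕ} (U Us : Matrix (Fin m) (Fin r) ℝ) (σ : Fin r → ℝ) {ε : ℝ}
    (hUs : Usᵀ * Us = 1) (hΔ : frob (U - Us) ≤ ε) (hε0 : 0 ≤ ε) (hε : ε ≤ 1 / 100) :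
    IsUnit (Uᵀ * U).det
    ∧ frob ((Uᵀ * U)⁻¹ * (Uᵀ * (U - Us))) ≤ 4 * ε
    ∧ frob ((Uᵀ * U)⁻¹ * (Uᵀ * (U - Us)) * Matrix.diagonal σ)
        ≤ 4 * frob ((U - Us) * Matrix.diagonal σ) := by
  have hΔnn : 0 ≤ frob (U - Us) := frob_nonneg _
  have h1 : frob (Usᵀ * (U - Us)) ≤ ε := (frob_orthT_le hUs _).trans hΔ
  have h2 : frob ((U - Us)ᵀ * Us) ≤ ε := by
    have heq2 : (U - Us)ᵀ * Us = (Usᵀ * (U - Us))ᵀ := by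
      rw [Matrix.transpose_mul, Matrix.transpose_transpose]
    rw [heq2, frob_transpose]; exact h1
  have h3 : frob ((U - Us)ᵀ * (U - Us)) ≤ ε := by
    calc frob ((U - Us)ᵀ * (U - Us)) ≤ frob (U - Us)ᵀ * frob (U - Us) := frob_mul_le _ _
      _ = frob (U - Us) * frob (U - Us) := by rw [frob_transpose]
      _ ≤ ε * ε := by nlinarith
      _ ≤ ε := by nlinarith
  have hnear : frob (Uᵀ * U - 1) ≤ 1 / 2 := by
    have heq : Uᵀ * U - 1
        = Usᵀ * (U - Us) + (U - Us)ᵀ * Us + (U - Us)ᵀ * (U - Us) := by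
      simp only [Matrix.transpose_sub, Matrix.sub_mul, Matrix.mul_sub]
      rw [hUs]
      abel
    calc frob (Uᵀ * U - 1)
        = frob (Usᵀ * (U - Us) + (U - Us)ᵀ * Us + (U - Us)ᵀ * (U - Us)) := by rw [heq]
      _ ≤ frob (Usᵀ * (U - Us) + (U - Us)ᵀ * Us) + frob ((U - Us)ᵀ * (U - Us)) :=
          frob_add_le _ _
      _ ≤ frob (Usᵀ * (U - Us)) + frob ((U - Us)ᵀ * Us) + frob ((U - Us)ᵀ * (U - Us)) := by
          have := frob_add_le (Usᵀ * (U - Us)) ((U - Us)ᵀ * Us); linarith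
      _ ≤ 3 * ε := by linarith
      _ ≤ 1 / 2 := by linarith
  have hPD : (Uᵀ * U).PosDef := posDef_of_near_one (gram_transpose U) hnear
  have hdet : IsUnit (Uᵀ * U).det := hPD.det_pos.ne'.isUnit
  have hUtΔ : frob (Uᵀ * (U - Us)) ≤ 2 * ε := by
    have heq : Uᵀ * (U - Us) = Usᵀ * (U - Us) + (U - Us)ᵀ * (U - Us) := by
      simp only [Matrix.transpose_sub, Matrix.sub_mul, Matrix.mul_sub]
      abel
    calc frob (Uᵀ * (U - Us))
        ≤ frob (Usᵀ * (U - Us)) + frob ((U - Us)ᵀ * (U - Us)) := by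
          rw [heq]; exact frob_add_le _ _
      _ ≤ 2 * ε := by linarith
  refine ⟨hdet, ?_, ?_⟩
  · calc frob ((Uᵀ * U)⁻¹ * (Uᵀ * (U - Us)))
        ≤ 2 * frob (Uᵀ * (U - Us)) := frob_inv_mul_le hdet hnear _
      _ ≤ 4 * ε := by linarith
  · have hassoc : (Uᵀ * U)⁻¹ * (Uᵀ * (U - Us)) * Matrix.diagonal σ
        = (Uᵀ * U)⁻¹ * (Uᵀ * (U - Us) * Matrix.diagonal σ) := by
      simp only [Matrix.mul_assoc]
    have hd : frob (Uᵀ * (U - Us) * Matrix.diagonal σ)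
        ≤ 2 * frob ((U - Us) * Matrix.diagonal σ) := by
      have heq : Uᵀ * (U - Us) * Matrix.diagonal σ
          = Usᵀ * ((U - Us) * Matrix.diagonal σ)
            + (U - Us)ᵀ * ((U - Us) * Matrix.diagonal σ) := by
        simp only [Matrix.transpose_sub, Matrix.sub_mul, Matrix.mul_sub, Matrix.mul_assoc]
        abel
      have ha : frob (Usᵀ * ((U - Us) * Matrix.diagonal σ))
          ≤ frob ((U - Us) * Matrix.diagonal σ) := frob_orthT_le hUs _
      have hb : frob ((U - Us)ᵀ * ((U - Us) * Matrix.diagonal σ))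
          ≤ frob ((U - Us) * Matrix.diagonal σ) := by
        calc frob ((U - Us)ᵀ * ((U - Us) * Matrix.diagonal σ))
            ≤ frob (U - Us)ᵀ * frob ((U - Us) * Matrix.diagonal σ) := frob_mul_le _ _
          _ ≤ 1 * frob ((U - Us) * Matrix.diagonal σ) := by
              have h4 : frob (U - Us)ᵀ ≤ 1 := by rw [frob_transpose]; linarith
              have := frob_nonneg ((U - Us) * Matrix.diagonal σ)
              nlinarith
          _ = frob ((U - Us) * Matrix.diagonal σ) := one_mul _
      calc frob (Uᵀ * (U - Us) * Matrix.diagonal σ)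
          ≤ frob (Usᵀ * ((U - Us) * Matrix.diagonal σ))
            + frob ((U - Us)ᵀ * ((U - Us) * Matrix.diagonal σ)) := by
            rw [heq]; exact frob_add_le _ _
        _ ≤ 2 * frob ((U - Us) * Matrix.diagonal σ) := by linarith
    calc frob ((Uᵀ * U)⁻¹ * (Uᵀ * (U - Us)) * Matrix.diagonal σ)
        = frob ((Uᵀ * U)⁻¹ * (Uᵀ * (U - Us) * Matrix.diagonal σ)) := by rw [hassoc]
      _ ≤ 2 * frob (Uᵀ * (U - Us) * Matrix.diagonal σ) := frob_inv_mul_le hdet hnear _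
      _ ≤ 4 * frob ((U - Us) * Matrix.diagonal σ) := by linarith

lemma mode_key {m r : ℕ} (U Us : Matrix (Fin m) (Fin r) ℝ)
    (MS MSs : Matrix (Fin r) q ℝ) (σ : Fin r → ℝ)
    (halign : Uᵀ * (U - Us) * (Matrix.diagonal σ * Matrix.diagonal σ)
        = (MS - MSs) * MSᵀ) :
    innerM (MS - MSs) ((Uᵀ * U)⁻¹ * (Uᵀ * (U - Us)) * MSs)
      = frob (invSqrtGram U * Uᵀ * (U - Us) * Matrix.diagonal σ) ^ 2
        - ((MS - MSs) * (MS - MSs)ᵀ * ((Uᵀ * U)⁻¹ * (Uᵀ * (U - Us)))ᵀ).trace := by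
  have h1 : innerM (MS - MSs) ((Uᵀ * U)⁻¹ * (Uᵀ * (U - Us)) * MSs)
      = ((MS - MSs) * MSsᵀ * ((Uᵀ * U)⁻¹ * (Uᵀ * (U - Us)))ᵀ).trace := by
    rw [innerM_eq_trace, Matrix.transpose_mul]
    simp only [Matrix.mul_assoc]
  have expand : (MS - MSs) * MSsᵀ
      = (MS - MSs) * MSᵀ - (MS - MSs) * (MS - MSs)ᵀ := by
    simp only [Matrix.transpose_sub, Matrix.mul_sub]
    abel
  rw [h1, expand, Matrix.sub_mul, Matrix.trace_sub]
  congr 1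
  rw [← halign]
  exact main_term_eq U (U - Us) σ

end Tier5
section Tier6

open Matrix
open scoped Kronecker

variable {m1 m2 m3 r1 r2 r3 : ℕ}

lemma frobT_tucker_mid_le (B : Matrix (Fin m2) (Fin r2) ℝ) (T : Tensor r1 r2 r3) :
    frobT (tucker (1 : Matrix (Fin r1) (Fin r1) ℝ) B (1 : Matrix (Fin r3) (Fin r3) ℝ) T) ≤ frob B * frobT T := by
  rw [frobT_eq_frob_M2, M2_tucker, Matrix.one_kronecker_one, Matrix.transpose_one,
    Matrix.mul_one, frobT_eq_frob_M2 T]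
  exact frob_mul_le _ _

lemma frobT_tucker_right_le (C : Matrix (Fin m3) (Fin r3) ℝ) (T : Tensor r1 r2 r3) :
    frobT (tucker (1 : Matrix (Fin r1) (Fin r1) ℝ) (1 : Matrix (Fin r2) (Fin r2) ℝ) C T) ≤ frob C * frobT T := by
  rw [frobT_eq_frob_M3, M3_tucker, Matrix.one_kronecker_one, Matrix.transpose_one,
    Matrix.mul_one, frobT_eq_frob_M3 T]
  exact frob_mul_le _ _

lemma sq_fun_eq (σ : Fin r1 → ℝ) : (fun i => σ i * σ i) = fun i => σ i ^ 2 :=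
  funext fun i => (sq (σ i)).symm

lemma frob_gram_diag {r q' : ℕ} {mq : Type*} [Fintype mq] (A : Matrix (Fin q') (Fin r) ℝ)
    (MSs : Matrix (Fin r) mq ℝ) (σ : Fin r → ℝ)
    (hG : MSs * MSsᵀ = Matrix.diagonal (fun i => σ i ^ 2)) :
    frob (A * MSs) = frob (A * Matrix.diagonal σ) := by
  apply frob_eq_of_sq_eq
  rw [frob_sq_eq_trace, frob_sq_eq_trace]
  have h1 : A * MSs * (A * MSs)ᵀ = A * (MSs * MSsᵀ) * Aᵀ := by
    rw [Matrix.transpose_mul]; simp only [Matrix.mul_assoc]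
  have h2 : A * Matrix.diagonal σ * (A * Matrix.diagonal σ)ᵀ
      = A * (Matrix.diagonal σ * Matrix.diagonal σ) * Aᵀ := by
    rw [Matrix.transpose_mul, Matrix.diagonal_transpose]; simp only [Matrix.mul_assoc]
  rw [h1, h2, hG, Matrix.diagonal_mul_diagonal, sq_fun_eq]

lemma frobT_tucker_left_gram (A : Matrix (Fin m1) (Fin r1) ℝ) (Ss : Tensor r1 r2 r3)
    (σ : Fin r1 → ℝ) (hG : M1 Ss * (M1 Ss)ᵀ = Matrix.diagonal (fun i => σ i ^ 2)) :
    frobT (tucker A (1 : Matrix (Fin r2) (Fin r2) ℝ) (1 : Matrix (Fin r3) (Fin r3) ℝ) Ss) = frob (A * Matrix.diagonal σ) := by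
  rw [frobT_eq_frob_M1, M1_tucker, Matrix.one_kronecker_one, Matrix.transpose_one,
    Matrix.mul_one]
  exact frob_gram_diag A (M1 Ss) σ hG

lemma frobT_tucker_mid_gram (B : Matrix (Fin m2) (Fin r2) ℝ) (Ss : Tensor r1 r2 r3)
    (σ : Fin r2 → ℝ) (hG : M2 Ss * (M2 Ss)ᵀ = Matrix.diagonal (fun i => σ i ^ 2)) :
    frobT (tucker (1 : Matrix (Fin r1) (Fin r1) ℝ) B (1 : Matrix (Fin r3) (Fin r3) ℝ) Ss) = frob (B * Matrix.diagonal σ) := by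
  rw [frobT_eq_frob_M2, M2_tucker, Matrix.one_kronecker_one, Matrix.transpose_one,
    Matrix.mul_one]
  exact frob_gram_diag B (M2 Ss) σ hG

end Tier6
section Tier7

lemma final_arith (A1 A2 A3 eU eV eW cUV cUW cVW cUVW dU dV dW dS ε : ℝ)
    (hε0 : 0 < ε) (hεb : ε ≤ 1 / 100)
    (hdU0 : 0 ≤ dU) (hdV0 : 0 ≤ dV) (hdS0 : 0 ≤ dS)
    (f1 : eU ≤ dS ^ 2 * (4 * ε)) (f2 : eV ≤ dS ^ 2 * (4 * ε)) (f3 : eW ≤ dS ^ 2 * (4 * ε))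
    (f4 : cUV ≤ dS * (4 * ε * (4 * dU))) (f5 : cUW ≤ dS * (4 * ε * (4 * dU)))
    (f6 : cVW ≤ dS * (4 * ε * (4 * dV)))
    (f7 : -(dS * (4 * ε * (4 * ε * (4 * dU)))) ≤ cUVW) :
    A1 - eU + (A2 - eV) + (A3 - eW) - cUV - cUW - cVW + cUVW
      ≥ A1 + A2 + A3 - 100 * ε * (dU ^ 2 + dV ^ 2 + dW ^ 2 + dS ^ 2) := by
  have hq : 0 ≤ (1 - 64 * ε) * (ε * (dS * dU)) :=
    mul_nonneg (by linarith) (mul_nonneg hε0.le (mul_nonneg hdS0 hdU0))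
  have hSU : ε * (dS * dU) ≤ ε * ((dS ^ 2 + dU ^ 2) / 2) :=
    mul_le_mul_of_nonneg_left (by nlinarith [sq_nonneg (dS - dU)]) hε0.le
  have hSV : ε * (dS * dV) ≤ ε * ((dS ^ 2 + dV ^ 2) / 2) :=
    mul_le_mul_of_nonneg_left (by nlinarith [sq_nonneg (dS - dV)]) hε0.le
  have g4 : 0 ≤ ε * dU ^ 2 := mul_nonneg hε0.le (sq_nonneg _)
  have g5 : 0 ≤ ε * dV ^ 2 := mul_nonneg hε0.le (sq_nonneg _)
  have g6 : 0 ≤ ε * dW ^ 2 := mul_nonneg hε0.le (sq_nonneg _)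
  have g7 : 0 ≤ ε * dS ^ 2 := mul_nonneg hε0.le (sq_nonneg _)
  nlinarith [hq, hSU, hSV, g4, g5, g6, g7]

end Tier7
section Main

open Matrix
open scoped Kronecker

lemma le_of_sq_le_sq' {a b : ℝ} (ha : 0 ≤ a) (hb : 0 ≤ b) (h : a ^ 2 ≤ b ^ 2) : a ≤ b := by
  have := Real.sqrt_le_sqrt h
  rwa [Real.sqrt_sq ha, Real.sqrt_sq hb] at this

end Main

/-- lower bound on the cross term 𝔖₁ (Claim 3). -/
theorem claim_S1
    : ∃ C1 εbar : ℝ, 1 < C1 ∧ 0 < εbar ∧ εbar < 1 ∧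
      ∀ (n1 n2 n3 r1 r2 r3 : ℕ), 0 < n1 → 0 < n2 → 0 < n3 → 0 < r1 → 0 < r2 → 0 < r3 →
      ∀ (σ1 : Fin r1 → ℝ) (σ2 : Fin r2 → ℝ) (σ3 : Fin r3 → ℝ)
        (Fs : Quad n1 n2 n3 r1 r2 r3), GroundTruth σ1 σ2 σ3 Fs →
      ∀ ε : ℝ, 0 < ε → ε ≤ εbar →
      ∀ F : Quad n1 n2 n3 r1 r2 r3,
        alignedClose σ1 σ2 σ3 F Fs ε → AlignEqs σ1 σ2 σ3 F Fs →
        innerT (F.S - Fs.S)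
            (tucker (((F.U)ᵀ * F.U)⁻¹ * (F.U)ᵀ) (((F.V)ᵀ * F.V)⁻¹ * (F.V)ᵀ)
              (((F.W)ᵀ * F.W)⁻¹ * (F.W)ᵀ) (tucker F.U F.V F.W Fs.S - Fs.X))
          ≥ (frob (invSqrtGram F.U * (F.U)ᵀ * (F.U - Fs.U) * Matrix.diagonal σ1)) ^ 2
            + (frob (invSqrtGram F.V * (F.V)ᵀ * (F.V - Fs.V) * Matrix.diagonal σ2)) ^ 2
            + (frob (invSqrtGram F.W * (F.W)ᵀ * (F.W - Fs.W) * Matrix.diagonal σ3)) ^ 2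
            - C1 * ε * ((frob ((F.U - Fs.U) * Matrix.diagonal σ1)) ^ 2
                + (frob ((F.V - Fs.V) * Matrix.diagonal σ2)) ^ 2
                + (frob ((F.W - Fs.W) * Matrix.diagonal σ3)) ^ 2
                + (frobT (F.S - Fs.S)) ^ 2) := by
  refine ⟨100, 1/100, by norm_num, by norm_num, by norm_num, ?_⟩
  intro n1 n2 n3 r1 r2 r3 hn1 hn2 hn3 hr1 hr2 hr3 σ1 σ2 σ3 Fs hGT ε hε0 hεb F hclose halign
  obtain ⟨hU, hV, hW, hG1, hG2, hG3, hp1, hp2, hp3, hm1, hm2, hm3⟩ := hGT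
  obtain ⟨ha1, ha2, ha3⟩ := halign
  set dU := frob ((F.U - Fs.U) * Matrix.diagonal σ1) with hdUdef
  set dV := frob ((F.V - Fs.V) * Matrix.diagonal σ2) with hdVdef
  set dW := frob ((F.W - Fs.W) * Matrix.diagonal σ3) with hdWdef
  set dS := frobT (F.S - Fs.S) with hdSdef
  have hdU0 : 0 ≤ dU := frob_nonneg _
  have hdV0 : 0 ≤ dV := frob_nonneg _
  have hdW0 : 0 ≤ dW := frob_nonneg _
  have hdS0 : 0 ≤ dS := frobT_nonneg _
  -- sigma min positivity and monotonicity
  have hl1 : 0 < lastVal σ1 := by unfold lastVal; rw [dif_pos hr1]; exact hp1 _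
  have hl2 : 0 < lastVal σ2 := by unfold lastVal; rw [dif_pos hr2]; exact hp2 _
  have hl3 : 0 < lastVal σ3 := by unfold lastVal; rw [dif_pos hr3]; exact hp3 _
  set σm := sigmaMin σ1 σ2 σ3 with hσmdef
  have hσm : 0 < σm := lt_min hl1 (lt_min hl2 hl3)
  have hmin1 : ∀ j, σm ≤ σ1 j := by
    intro j
    have h1 : σm ≤ lastVal σ1 := min_le_left _ _
    have h2 : lastVal σ1 = σ1 ⟨r1 - 1, by omega⟩ := by unfold lastVal; rw [dif_pos hr1]
    have h3 : σ1 ⟨r1 - 1, by omega⟩ ≤ σ1 j := by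
      refine hm1 j ⟨r1 - 1, by omega⟩ ?_
      rw [Fin.le_def]
      have := j.isLt
      simp only
      omega
    linarith
  have hmin2 : ∀ j, σm ≤ σ2 j := by
    intro j
    have h1 : σm ≤ lastVal σ2 := le_trans (min_le_right _ _) (min_le_left _ _)
    have h2 : lastVal σ2 = σ2 ⟨r2 - 1, by omega⟩ := by unfold lastVal; rw [dif_pos hr2]
    have h3 : σ2 ⟨r2 - 1, by omega⟩ ≤ σ2 j := by
      refine hm2 j ⟨r2 - 1, by omega⟩ ?_
      rw [Fin.le_def]
      have := j.isLt
      simp only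
      omega
    linarith
  have hmin3 : ∀ j, σm ≤ σ3 j := by
    intro j
    have h1 : σm ≤ lastVal σ3 := le_trans (min_le_right _ _) (min_le_right _ _)
    have h2 : lastVal σ3 = σ3 ⟨r3 - 1, by omega⟩ := by unfold lastVal; rw [dif_pos hr3]
    have h3 : σ3 ⟨r3 - 1, by omega⟩ ≤ σ3 j := by
      refine hm3 j ⟨r3 - 1, by omega⟩ ?_
      rw [Fin.le_def]
      have := j.isLt
      simp only
      omega
    linarith
  -- closeness
  have hD : dU ^ 2 + dV ^ 2 + dW ^ 2 + dS ^ 2 ≤ ε ^ 2 * σm ^ 2 := hclose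
  have hdUε : dU ≤ ε * σm := by
    refine le_of_sq_le_sq' hdU0 (by positivity) ?_
    nlinarith [sq_nonneg dV, sq_nonneg dW, sq_nonneg dS]
  have hdVε : dV ≤ ε * σm := by
    refine le_of_sq_le_sq' hdV0 (by positivity) ?_
    nlinarith [sq_nonneg dU, sq_nonneg dW, sq_nonneg dS]
  have hdWε : dW ≤ ε * σm := by
    refine le_of_sq_le_sq' hdW0 (by positivity) ?_
    nlinarith [sq_nonneg dU, sq_nonneg dV, sq_nonneg dS]
  -- delta bounds
  have hΔU : frob (F.U - Fs.U) ≤ ε := by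
    have h := mul_frob_le_frob_mul_diag (F.U - Fs.U) σ1 hσm.le hmin1
    rw [← hdUdef] at h
    nlinarith [frob_nonneg (F.U - Fs.U)]
  have hΔV : frob (F.V - Fs.V) ≤ ε := by
    have h := mul_frob_le_frob_mul_diag (F.V - Fs.V) σ2 hσm.le hmin2
    rw [← hdVdef] at h
    nlinarith [frob_nonneg (F.V - Fs.V)]
  have hΔW : frob (F.W - Fs.W) ≤ ε := by
    have h := mul_frob_le_frob_mul_diag (F.W - Fs.W) σ3 hσm.le hmin3
    rw [← hdWdef] at h
    nlinarith [frob_nonneg (F.W - Fs.W)]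
  obtain ⟨hdetU, hgUb, hgUd⟩ := factor_facts F.U Fs.U σ1 hU hΔU hε0.le hεb
  obtain ⟨hdetV, hgVb, hgVd⟩ := factor_facts F.V Fs.V σ2 hV hΔV hε0.le hεb
  obtain ⟨hdetW, hgWb, hgWd⟩ := factor_facts F.W Fs.W σ3 hW hΔW hε0.le hεb
  set gU := ((F.U)ᵀ * F.U)⁻¹ * ((F.U)ᵀ * (F.U - Fs.U)) with hgUdef
  set gV := ((F.V)ᵀ * F.V)⁻¹ * ((F.V)ᵀ * (F.V - Fs.V)) with hgVdef
  set gW := ((F.W)ᵀ * F.W)⁻¹ * ((F.W)ᵀ * (F.W - Fs.W)) with hgWdef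
  -- projections
  have hPU1 : (((F.U)ᵀ * F.U)⁻¹ * (F.U)ᵀ) * F.U = 1 := by
    rw [Matrix.mul_assoc, Matrix.nonsing_inv_mul _ hdetU]
  have hPV1 : (((F.V)ᵀ * F.V)⁻¹ * (F.V)ᵀ) * F.V = 1 := by
    rw [Matrix.mul_assoc, Matrix.nonsing_inv_mul _ hdetV]
  have hPW1 : (((F.W)ᵀ * F.W)⁻¹ * (F.W)ᵀ) * F.W = 1 := by
    rw [Matrix.mul_assoc, Matrix.nonsing_inv_mul _ hdetW]
  have hPUs : (((F.U)ᵀ * F.U)⁻¹ * (F.U)ᵀ) * Fs.U = 1 - gU := by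
    have hFs : Fs.U = F.U - (F.U - Fs.U) := (sub_sub_cancel _ _).symm
    rw [hFs, Matrix.mul_sub, hPU1, hgUdef, Matrix.mul_assoc]
  have hPVs : (((F.V)ᵀ * F.V)⁻¹ * (F.V)ᵀ) * Fs.V = 1 - gV := by
    have hFs : Fs.V = F.V - (F.V - Fs.V) := (sub_sub_cancel _ _).symm
    rw [hFs, Matrix.mul_sub, hPV1, hgVdef, Matrix.mul_assoc]
  have hPWs : (((F.W)ᵀ * F.W)⁻¹ * (F.W)ᵀ) * Fs.W = 1 - gW := by
    have hFs : Fs.W = F.W - (F.W - Fs.W) := (sub_sub_cancel _ _).symm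
    rw [hFs, Matrix.mul_sub, hPW1, hgWdef, Matrix.mul_assoc]
  -- decomposition
  have hXs : Fs.X = tucker Fs.U Fs.V Fs.W Fs.S := rfl
  have hT : tucker (((F.U)ᵀ * F.U)⁻¹ * (F.U)ᵀ) (((F.V)ᵀ * F.V)⁻¹ * (F.V)ᵀ)
        (((F.W)ᵀ * F.W)⁻¹ * (F.W)ᵀ) (tucker F.U F.V F.W Fs.S - Fs.X)
      = tucker gU (1 : Matrix (Fin r2) (Fin r2) ℝ) (1 : Matrix (Fin r3) (Fin r3) ℝ) Fs.S
        + tucker (1 : Matrix (Fin r1) (Fin r1) ℝ) gV (1 : Matrix (Fin r3) (Fin r3) ℝ) Fs.S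
        + tucker (1 : Matrix (Fin r1) (Fin r1) ℝ) (1 : Matrix (Fin r2) (Fin r2) ℝ) gW Fs.S
        - tucker gU gV (1 : Matrix (Fin r3) (Fin r3) ℝ) Fs.S
        - tucker gU (1 : Matrix (Fin r2) (Fin r2) ℝ) gW Fs.S
        - tucker (1 : Matrix (Fin r1) (Fin r1) ℝ) gV gW Fs.S
        + tucker gU gV gW Fs.S := by
    rw [hXs, tucker_sub_S, tucker_tucker, tucker_tucker, hPU1, hPV1, hPW1, hPUs, hPVs, hPWs,
      tucker_sub_left, tucker_sub_mid, tucker_sub_mid, tucker_sub_right, tucker_sub_right,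
      tucker_sub_right, tucker_sub_right]
    abel
  rw [hT, innerT_add, innerT_sub, innerT_sub, innerT_sub, innerT_add, innerT_add]
  -- main terms
  have hkey1 : innerT (F.S - Fs.S)
      (tucker gU (1 : Matrix (Fin r2) (Fin r2) ℝ) (1 : Matrix (Fin r3) (Fin r3) ℝ) Fs.S)
      = frob (invSqrtGram F.U * (F.U)ᵀ * (F.U - Fs.U) * Matrix.diagonal σ1) ^ 2
        - ((M1 F.S - M1 Fs.S) * (M1 F.S - M1 Fs.S)ᵀ * gUᵀ).trace := by
    rw [innerT_eq_innerM_M1, M1_tucker, Matrix.one_kronecker_one, Matrix.transpose_one,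
      Matrix.mul_one, M1_sub]
    exact mode_key F.U Fs.U (M1 F.S) (M1 Fs.S) σ1 (by have h := ha1; rwa [M1_sub] at h)
  have hkey2 : innerT (F.S - Fs.S)
      (tucker (1 : Matrix (Fin r1) (Fin r1) ℝ) gV (1 : Matrix (Fin r3) (Fin r3) ℝ) Fs.S)
      = frob (invSqrtGram F.V * (F.V)ᵀ * (F.V - Fs.V) * Matrix.diagonal σ2) ^ 2
        - ((M2 F.S - M2 Fs.S) * (M2 F.S - M2 Fs.S)ᵀ * gVᵀ).trace := by
    rw [innerT_eq_innerM_M2, M2_tucker, Matrix.one_kronecker_one, Matrix.transpose_one,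
      Matrix.mul_one, M2_sub]
    exact mode_key F.V Fs.V (M2 F.S) (M2 Fs.S) σ2 (by have h := ha2; rwa [M2_sub] at h)
  have hkey3 : innerT (F.S - Fs.S)
      (tucker (1 : Matrix (Fin r1) (Fin r1) ℝ) (1 : Matrix (Fin r2) (Fin r2) ℝ) gW Fs.S)
      = frob (invSqrtGram F.W * (F.W)ᵀ * (F.W - Fs.W) * Matrix.diagonal σ3) ^ 2
        - ((M3 F.S - M3 Fs.S) * (M3 F.S - M3 Fs.S)ᵀ * gWᵀ).trace := by
    rw [innerT_eq_innerM_M3, M3_tucker, Matrix.one_kronecker_one, Matrix.transpose_one,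
      Matrix.mul_one, M3_sub]
    exact mode_key F.W Fs.W (M3 F.S) (M3 Fs.S) σ3 (by have h := ha3; rwa [M3_sub] at h)
  -- error bounds for corrections
  have heU : |((M1 F.S - M1 Fs.S) * (M1 F.S - M1 Fs.S)ᵀ * gUᵀ).trace| ≤ dS ^ 2 * (4 * ε) := by
    have h := trace_err_bound (M1 F.S - M1 Fs.S) gU
    have hfs : frob (M1 F.S - M1 Fs.S) = dS := by
      rw [← M1_sub, ← frobT_eq_frob_M1]
    rw [hfs] at h
    have h2 : dS ^ 2 * frob gU ≤ dS ^ 2 * (4 * ε) :=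
      mul_le_mul_of_nonneg_left hgUb (sq_nonneg dS)
    linarith
  have heV : |((M2 F.S - M2 Fs.S) * (M2 F.S - M2 Fs.S)ᵀ * gVᵀ).trace| ≤ dS ^ 2 * (4 * ε) := by
    have h := trace_err_bound (M2 F.S - M2 Fs.S) gV
    have hfs : frob (M2 F.S - M2 Fs.S) = dS := by
      rw [← M2_sub, ← frobT_eq_frob_M2]
    rw [hfs] at h
    have h2 : dS ^ 2 * frob gV ≤ dS ^ 2 * (4 * ε) :=
      mul_le_mul_of_nonneg_left hgVb (sq_nonneg dS)
    linarith
  have heW : |((M3 F.S - M3 Fs.S) * (M3 F.S - M3 Fs.S)ᵀ * gWᵀ).trace| ≤ dS ^ 2 * (4 * ε) := by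
    have h := trace_err_bound (M3 F.S - M3 Fs.S) gW
    have hfs : frob (M3 F.S - M3 Fs.S) = dS := by
      rw [← M3_sub, ← frobT_eq_frob_M3]
    rw [hfs] at h
    have h2 : dS ^ 2 * frob gW ≤ dS ^ 2 * (4 * ε) :=
      mul_le_mul_of_nonneg_left hgWb (sq_nonneg dS)
    linarith
  -- cross-term bounds
  have hgU0 : 0 ≤ frob gU := frob_nonneg _
  have hgV0 : 0 ≤ frob gV := frob_nonneg _
  have hgW0 : 0 ≤ frob gW := frob_nonneg _
  have hfU : frobT (tucker gU (1 : Matrix (Fin r2) (Fin r2) ℝ)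
      (1 : Matrix (Fin r3) (Fin r3) ℝ) Fs.S) = frob (gU * Matrix.diagonal σ1) :=
    frobT_tucker_left_gram gU Fs.S σ1 hG1
  have hfV : frobT (tucker (1 : Matrix (Fin r1) (Fin r1) ℝ) gV
      (1 : Matrix (Fin r3) (Fin r3) ℝ) Fs.S) = frob (gV * Matrix.diagonal σ2) :=
    frobT_tucker_mid_gram gV Fs.S σ2 hG2
  have hcUV : |innerT (F.S - Fs.S) (tucker gU gV (1 : Matrix (Fin r3) (Fin r3) ℝ) Fs.S)|
      ≤ dS * (4 * ε * (4 * dU)) := by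
    have hsplit : tucker gU gV (1 : Matrix (Fin r3) (Fin r3) ℝ) Fs.S
        = tucker (1 : Matrix (Fin r1) (Fin r1) ℝ) gV (1 : Matrix (Fin r3) (Fin r3) ℝ)
            (tucker gU (1 : Matrix (Fin r2) (Fin r2) ℝ)
              (1 : Matrix (Fin r3) (Fin r3) ℝ) Fs.S) := by
      rw [tucker_tucker]
      simp only [Matrix.one_mul, Matrix.mul_one]
    have hf : frobT (tucker gU gV (1 : Matrix (Fin r3) (Fin r3) ℝ) Fs.S)
        ≤ 4 * ε * (4 * dU) := by
      calc frobT (tucker gU gV (1 : Matrix (Fin r3) (Fin r3) ℝ) Fs.S)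
          = frobT (tucker (1 : Matrix (Fin r1) (Fin r1) ℝ) gV
              (1 : Matrix (Fin r3) (Fin r3) ℝ) (tucker gU (1 : Matrix (Fin r2) (Fin r2) ℝ)
              (1 : Matrix (Fin r3) (Fin r3) ℝ) Fs.S)) := by rw [hsplit]
        _ ≤ frob gV * frobT (tucker gU (1 : Matrix (Fin r2) (Fin r2) ℝ)
              (1 : Matrix (Fin r3) (Fin r3) ℝ) Fs.S) := frobT_tucker_mid_le _ _
        _ = frob gV * frob (gU * Matrix.diagonal σ1) := by rw [hfU]
        _ ≤ 4 * ε * (4 * dU) :=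
            mul_le_mul hgVb hgUd (frob_nonneg _) (by positivity)
    calc |innerT (F.S - Fs.S) (tucker gU gV (1 : Matrix (Fin r3) (Fin r3) ℝ) Fs.S)|
        ≤ dS * frobT (tucker gU gV (1 : Matrix (Fin r3) (Fin r3) ℝ) Fs.S) :=
          abs_innerT_le _ _
      _ ≤ dS * (4 * ε * (4 * dU)) := mul_le_mul_of_nonneg_left hf hdS0
  have hcUW : |innerT (F.S - Fs.S) (tucker gU (1 : Matrix (Fin r2) (Fin r2) ℝ) gW Fs.S)|
      ≤ dS * (4 * ε * (4 * dU)) := by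
    have hsplit : tucker gU (1 : Matrix (Fin r2) (Fin r2) ℝ) gW Fs.S
        = tucker (1 : Matrix (Fin r1) (Fin r1) ℝ) (1 : Matrix (Fin r2) (Fin r2) ℝ) gW
            (tucker gU (1 : Matrix (Fin r2) (Fin r2) ℝ)
              (1 : Matrix (Fin r3) (Fin r3) ℝ) Fs.S) := by
      rw [tucker_tucker]
      simp only [Matrix.one_mul, Matrix.mul_one]
    have hf : frobT (tucker gU (1 : Matrix (Fin r2) (Fin r2) ℝ) gW Fs.S)
        ≤ 4 * ε * (4 * dU) := by
      calc frobT (tucker gU (1 : Matrix (Fin r2) (Fin r2) ℝ) gW Fs.S)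
          = frobT (tucker (1 : Matrix (Fin r1) (Fin r1) ℝ)
              (1 : Matrix (Fin r2) (Fin r2) ℝ) gW (tucker gU
              (1 : Matrix (Fin r2) (Fin r2) ℝ) (1 : Matrix (Fin r3) (Fin r3) ℝ) Fs.S)) := by
            rw [hsplit]
        _ ≤ frob gW * frobT (tucker gU (1 : Matrix (Fin r2) (Fin r2) ℝ)
              (1 : Matrix (Fin r3) (Fin r3) ℝ) Fs.S) := frobT_tucker_right_le _ _
        _ = frob gW * frob (gU * Matrix.diagonal σ1) := by rw [hfU]
        _ ≤ 4 * ε * (4 * dU) :=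
            mul_le_mul hgWb hgUd (frob_nonneg _) (by positivity)
    calc |innerT (F.S - Fs.S) (tucker gU (1 : Matrix (Fin r2) (Fin r2) ℝ) gW Fs.S)|
        ≤ dS * frobT (tucker gU (1 : Matrix (Fin r2) (Fin r2) ℝ) gW Fs.S) :=
          abs_innerT_le _ _
      _ ≤ dS * (4 * ε * (4 * dU)) := mul_le_mul_of_nonneg_left hf hdS0
  have hcVW : |innerT (F.S - Fs.S) (tucker (1 : Matrix (Fin r1) (Fin r1) ℝ) gV gW Fs.S)|
      ≤ dS * (4 * ε * (4 * dV)) := by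
    have hsplit : tucker (1 : Matrix (Fin r1) (Fin r1) ℝ) gV gW Fs.S
        = tucker (1 : Matrix (Fin r1) (Fin r1) ℝ) (1 : Matrix (Fin r2) (Fin r2) ℝ) gW
            (tucker (1 : Matrix (Fin r1) (Fin r1) ℝ) gV
              (1 : Matrix (Fin r3) (Fin r3) ℝ) Fs.S) := by
      rw [tucker_tucker]
      simp only [Matrix.one_mul, Matrix.mul_one]
    have hf : frobT (tucker (1 : Matrix (Fin r1) (Fin r1) ℝ) gV gW Fs.S)
        ≤ 4 * ε * (4 * dV) := by
      calc frobT (tucker (1 : Matrix (Fin r1) (Fin r1) ℝ) gV gW Fs.S)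
          = frobT (tucker (1 : Matrix (Fin r1) (Fin r1) ℝ)
              (1 : Matrix (Fin r2) (Fin r2) ℝ) gW (tucker (1 : Matrix (Fin r1) (Fin r1) ℝ)
              gV (1 : Matrix (Fin r3) (Fin r3) ℝ) Fs.S)) := by rw [hsplit]
        _ ≤ frob gW * frobT (tucker (1 : Matrix (Fin r1) (Fin r1) ℝ) gV
              (1 : Matrix (Fin r3) (Fin r3) ℝ) Fs.S) := frobT_tucker_right_le _ _
        _ = frob gW * frob (gV * Matrix.diagonal σ2) := by rw [hfV]
        _ ≤ 4 * ε * (4 * dV) :=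
            mul_le_mul hgWb hgVd (frob_nonneg _) (by positivity)
    calc |innerT (F.S - Fs.S) (tucker (1 : Matrix (Fin r1) (Fin r1) ℝ) gV gW Fs.S)|
        ≤ dS * frobT (tucker (1 : Matrix (Fin r1) (Fin r1) ℝ) gV gW Fs.S) :=
          abs_innerT_le _ _
      _ ≤ dS * (4 * ε * (4 * dV)) := mul_le_mul_of_nonneg_left hf hdS0
  have hcUVW : |innerT (F.S - Fs.S) (tucker gU gV gW Fs.S)|
      ≤ dS * (4 * ε * (4 * ε * (4 * dU))) := by
    have hsplit : tucker gU gV gW Fs.S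
        = tucker (1 : Matrix (Fin r1) (Fin r1) ℝ) gV (1 : Matrix (Fin r3) (Fin r3) ℝ)
            (tucker (1 : Matrix (Fin r1) (Fin r1) ℝ) (1 : Matrix (Fin r2) (Fin r2) ℝ) gW
              (tucker gU (1 : Matrix (Fin r2) (Fin r2) ℝ)
                (1 : Matrix (Fin r3) (Fin r3) ℝ) Fs.S)) := by
      rw [tucker_tucker, tucker_tucker]
      simp only [Matrix.one_mul, Matrix.mul_one]
    have hf : frobT (tucker gU gV gW Fs.S) ≤ 4 * ε * (4 * ε * (4 * dU)) := by
      calc frobT (tucker gU gV gW Fs.S)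
          = frobT (tucker (1 : Matrix (Fin r1) (Fin r1) ℝ) gV
              (1 : Matrix (Fin r3) (Fin r3) ℝ)
              (tucker (1 : Matrix (Fin r1) (Fin r1) ℝ) (1 : Matrix (Fin r2) (Fin r2) ℝ) gW
                (tucker gU (1 : Matrix (Fin r2) (Fin r2) ℝ)
                  (1 : Matrix (Fin r3) (Fin r3) ℝ) Fs.S))) := by rw [hsplit]
        _ ≤ frob gV * frobT (tucker (1 : Matrix (Fin r1) (Fin r1) ℝ)
              (1 : Matrix (Fin r2) (Fin r2) ℝ) gW (tucker gU
              (1 : Matrix (Fin r2) (Fin r2) ℝ) (1 : Matrix (Fin r3) (Fin r3) ℝ) Fs.S)) :=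
            frobT_tucker_mid_le _ _
        _ ≤ frob gV * (frob gW * frobT (tucker gU (1 : Matrix (Fin r2) (Fin r2) ℝ)
              (1 : Matrix (Fin r3) (Fin r3) ℝ) Fs.S)) := by
            refine mul_le_mul_of_nonneg_left (frobT_tucker_right_le _ _) hgV0
        _ = frob gV * (frob gW * frob (gU * Matrix.diagonal σ1)) := by rw [hfU]
        _ ≤ 4 * ε * (4 * ε * (4 * dU)) := by
            refine mul_le_mul hgVb ?_ (mul_nonneg hgW0 (frob_nonneg _)) (by positivity)
            exact mul_le_mul hgWb hgUd (frob_nonneg _) (by positivity)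
    calc |innerT (F.S - Fs.S) (tucker gU gV gW Fs.S)|
        ≤ dS * frobT (tucker gU gV gW Fs.S) := abs_innerT_le _ _
      _ ≤ dS * (4 * ε * (4 * ε * (4 * dU))) := mul_le_mul_of_nonneg_left hf hdS0
  -- final arithmetic
  rw [hkey1, hkey2, hkey3]
  exact final_arith _ _ _ _ _ _ _ _ _ _ dU dV dW dS ε hε0 hεb hdU0 hdV0 hdS0
    (abs_le.mp heU).2 (abs_le.mp heV).2 (abs_le.mp heW).2
    (abs_le.mp hcUV).2 (abs_le.mp hcUW).2 (abs_le.mp hcVW).2 (abs_le.mp hcUVW).1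

end ScaledGD
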